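/- Let O ⊆ ℝ² be a connected open set, with D = dom(O) and I = im(O). Then: (1) joinsemi(tMoves(O)) = tMoves((D ∪ I) × (D ∪ I)); (2a) if D ∩ I = ∅, then joinsemi(rMoves(O)) = rMoves((D × I) ∪ (I × D)) ∪ tMoves((D × D) ∪ (I × I)); (2b) if D ∩ I ≠ ∅, then joinsemi(rMoves(O)) = moves((D ∪ I) × (D ∪ I)); (3) joinsemi(moves(O)) = moves((D ∪ I) × (D ∪ I)). -/

import Mathlib

open Filter Set

noncomputable section

/-- The unrestricted translation (`b = false`) or reflection (`b = true`)
with parameter `p`: `x ↦ x + p`, resp. `x ↦ p - x`. -/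
def uEval (b : Bool) (p : ℝ) (x : ℝ) : ℝ := if b then p - x else x + p

/-- A restricted move `γ|_D`: a translation (`isRefl = false`) or a
reflection (`isRefl = true`) together with a domain. -/
structure Move where
  isRefl : Bool
  param : ℝ
  dom : Set ℝ

namespace Move

def eval (m : Move) : ℝ → ℝ := uEval m.isRefl m.param

/-- The character: `+1` for translations, `-1` for reflections. -/
def chi (m : Move) : ℝ := if m.isRefl then -1 else 1

def image (m : Move) : Set ℝ := m.eval '' m.dom

def graph (m : Move) : Set (ℝ × ℝ) := (fun x => (x, m.eval x)) '' m.dom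

/-- Domains of moves must be open intervals or empty. -/
def ValidDom (D : Set ℝ) : Prop := IsOpen D ∧ D.OrdConnected

/-- A valid move: open-interval-or-empty domain; moves with empty domain are
normalized (`param = 0`), so that there are exactly two empty moves, one of
each character. -/
def Valid (m : Move) : Prop := ValidDom m.dom ∧ (m.dom = ∅ → m.param = 0)

/-- The move `γ|_D` (normalized representative). -/
def mk' (b : Bool) (p : ℝ) (D : Set ℝ) : Move :=
  letI : Decidable (D = ∅) := Classical.dec _
  ⟨b, if D = ∅ then 0 else p, D⟩

/-- Composition of moves: `γ₂|_{D₂} ∘ γ₁|_{D₁} = (γ₂ ∘ γ₁)|_{D₁ ∩ γ₁⁻¹ D₂}`. -/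
def comp (m2 m1 : Move) : Move :=
  mk' (m2.isRefl != m1.isRefl)
    (if m2.isRefl then m2.param - m1.param else m1.param + m2.param)
    (m1.dom ∩ m1.eval ⁻¹' m2.dom)

/-- Inverse of a move: `(γ|_D)⁻¹ = γ⁻¹|_{γ(D)}`. -/
def inv (m : Move) : Move :=
  mk' m.isRefl (if m.isRefl then m.param else -m.param) (m.eval '' m.dom)

/-- The restriction partial order: `m1` is a restriction of `m2`. -/
def le (m1 m2 : Move) : Prop :=
  m1.isRefl = m2.isRefl ∧ m1.dom ⊆ m2.dom ∧ ∀ x ∈ m1.dom, m1.eval x = m2.eval x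

end Move

/-- A move ensemble: a set of (valid) moves. -/
def IsMoveEnsemble (Ω : Set Move) : Prop := ∀ m ∈ Ω, m.Valid

/-- A move semigroup: a move ensemble closed under composition and inverse. -/
def IsMoveSemigroup (Γ : Set Move) : Prop :=
  IsMoveEnsemble Γ ∧ (∀ m1 ∈ Γ, ∀ m2 ∈ Γ, Move.comp m2 m1 ∈ Γ) ∧
    (∀ m ∈ Γ, Move.inv m ∈ Γ)

/-- `⟨Ω⟩`: the smallest move semigroup containing `Ω`. -/
def semi (Ω : Set Move) : Set Move := ⋂₀ {Γ | IsMoveSemigroup Γ ∧ Ω ⊆ Γ}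

/-- Axiom (restrict). -/
def RestrictClosed (Ω : Set Move) : Prop :=
  ∀ m ∈ Ω, ∀ D' : Set ℝ, D' ⊆ m.dom → Move.ValidDom D' →
    Move.mk' m.isRefl m.param D' ∈ Ω

/-- The restriction closure of an ensemble. -/
def restrictCl (Ω : Set Move) : Set Move := ⋂₀ {Γ | RestrictClosed Γ ∧ Ω ⊆ Γ}

/-- Join-closed: restriction-closed and closed under continuation (joins). -/
def JoinClosed (Ω : Set Move) : Prop :=
  RestrictClosed Ω ∧
    ∀ (b : Bool) (p : ℝ) (J : Set (Set ℝ)), J.Nonempty →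
      (∀ I ∈ J, Move.mk' b p I ∈ Ω) → (⋃₀ J).OrdConnected →
      Move.mk' b p (⋃₀ J) ∈ Ω

/-- `join(Ω)`: the smallest join-closed ensemble containing `Ω`. -/
def joinCl (Ω : Set Move) : Set Move := ⋂₀ {Γ | JoinClosed Γ ∧ Ω ⊆ Γ}

/-- `joinsemi(Ω) = join(⟨Ω⟩)`: the joined move semigroup generated by `Ω`. -/
def joinsemi (Ω : Set Move) : Set Move := joinCl (semi Ω)

/-- `θ` respects the move `γ|_D`: `θ(γ(x)) = χ(γ)·θ(x) + c` on `D`. -/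
def Respects (θ : ℝ → ℝ) (m : Move) : Prop :=
  ∃ c : ℝ, ∀ x ∈ m.dom, θ (m.eval x) = m.chi * θ x + c

/-- `θ` respects each move of the ensemble `Ω`. -/
def RespectsAll (θ : ℝ → ℝ) (Ω : Set Move) : Prop := ∀ m ∈ Ω, Respects θ m

/-- All translation moves with graph contained in `O`. -/
def tMoves (O : Set (ℝ × ℝ)) : Set Move :=
  {m | m.isRefl = false ∧ m.Valid ∧ m.graph ⊆ O}

/-- All reflection moves with graph contained in `O`. -/
def rMoves (O : Set (ℝ × ℝ)) : Set Move :=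
  {m | m.isRefl = true ∧ m.Valid ∧ m.graph ⊆ O}

/-- All moves with graph contained in `O`. -/
def movesIn (O : Set (ℝ × ℝ)) : Set Move := {m | m.Valid ∧ m.graph ⊆ O}

/-- Translation moves graph of an ensemble. -/
def grPlus (Ω : Set Move) : Set (ℝ × ℝ) :=
  {q | ∃ m ∈ Ω, m.isRefl = false ∧ q ∈ m.graph}

/-- Reflection moves graph of an ensemble. -/
def grMinus (Ω : Set Move) : Set (ℝ × ℝ) :=
  {q | ∃ m ∈ Ω, m.isRefl = true ∧ q ∈ m.graph}

/-- `dom(O)`: union of the domains of the moves in `movesIn O`. -/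
def domOf (O : Set (ℝ × ℝ)) : Set ℝ := {x | ∃ m ∈ movesIn O, x ∈ m.dom}

/-- `im(O)`: union of the images of the moves in `movesIn O`. -/
def imOf (O : Set (ℝ × ℝ)) : Set ℝ := {x | ∃ m ∈ movesIn O, x ∈ m.image}

/-- domain of a move ensemble. -/
def domEns (Ω : Set Move) : Set ℝ := {x | ∃ m ∈ Ω, x ∈ m.dom}

/-- image of a move ensemble. -/
def imEns (Ω : Set Move) : Set ℝ := {x | ∃ m ∈ Ω, x ∈ m.image}

/-- Convergence of a sequence of unrestricted moves (character, parameter):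
all but finitely many have character `b`, and the parameters tend to `p`. -/
def ConvergesTo (γ : ℕ → Bool × ℝ) (b : Bool) (p : ℝ) : Prop :=
  (∀ᶠ i in atTop, (γ i).1 = b) ∧ Tendsto (fun i => (γ i).2) atTop (nhds p)

/-- Axiom (lim): fixed-domain limits of moves. -/
def LimClosed (Ω : Set Move) : Prop :=
  ∀ D : Set ℝ, Move.ValidDom D →
    ∀ (γ : ℕ → Bool × ℝ) (b : Bool) (p : ℝ), ConvergesTo γ b p →
      (∀ i, Move.mk' (γ i).1 (γ i).2 D ∈ Ω) → Move.mk' b p D ∈ Ω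

/-- `lim(Ω)`: the smallest superset of `Ω` satisfying (lim). -/
def limCl (Ω : Set Move) : Set Move := ⋂₀ {Γ | LimClosed Γ ∧ Ω ⊆ Γ}

/-- Axiom (arblim): limits of moves with converging domains. -/
def ArbLimClosed (Ω : Set Move) : Prop :=
  ∀ (γ : ℕ → Bool × ℝ) (b : Bool) (p : ℝ) (l u : ℕ → ℝ) (l₀ u₀ : ℝ),
    ConvergesTo γ b p → Tendsto l atTop (nhds l₀) → Tendsto u atTop (nhds u₀) →
    (∀ i, Move.mk' (γ i).1 (γ i).2 (Set.Ioo (l i) (u i)) ∈ Ω) →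
    Move.mk' b p (Set.Ioo l₀ u₀) ∈ Ω

/-- `arblim(Ω)`: the smallest superset of `Ω` satisfying (arblim). -/
def arblimCl (Ω : Set Move) : Set Move := ⋂₀ {Γ | ArbLimClosed Γ ∧ Ω ⊆ Γ}

/-- Axiom (kaleido). -/
def Kaleidoscopic (Ω : Set Move) : Prop :=
  ∀ D I : Set ℝ, Move.ValidDom D → Move.ValidDom I →
    (tMoves (D ×ˢ I) ⊆ Ω ↔ rMoves (D ×ˢ I) ⊆ Ω)

/-- Axiom (extend_A): continuous domain extension relative to the open set `A`. -/
def ExtendClosed (A : Set ℝ) (Ω : Set Move) : Prop :=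
  ∀ (b : Bool) (p : ℝ) (J : Set (Set ℝ)) (D : Set ℝ), J.Nonempty →
    (∀ I ∈ J, Move.mk' b p I ∈ Ω) → Move.ValidDom D →
    D ⊆ closure (⋃₀ J) ∩ A ∩ uEval b p ⁻¹' A →
    Move.mk' b p D ∈ Ω

/-- `joinextend_A(Ω)`: the smallest superset of `Ω` satisfying (extend_A). -/
def joinExtendCl (A : Set ℝ) (Ω : Set Move) : Set Move :=
  ⋂₀ {Γ | ExtendClosed A Γ ∧ Ω ⊆ Γ}

/-- A closed move semigroup with respect to the open set `A`. -/
def ClosedMoveSemigroup (A : Set ℝ) (Γ : Set Move) : Prop :=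
  IsMoveSemigroup Γ ∧ JoinClosed Γ ∧ Kaleidoscopic Γ ∧ LimClosed Γ ∧
    ExtendClosed A Γ

/-- The moves closure `ctscl(Ω)`: the smallest closed move semigroup
(with respect to `A`) containing `Ω`. -/
def ctscl (A : Set ℝ) (Ω : Set Move) : Set Move :=
  ⋂₀ {Γ | ClosedMoveSemigroup A Γ ∧ Ω ⊆ Γ}

/-- The set of maximal elements of `Ω` in the restriction partial order. -/
def MaxOf (Ω : Set Move) : Set Move :=
  {m ∈ Ω | ∀ m' ∈ Ω, Move.le m m' → Move.le m' m}

/-!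
Every point `(x, y)` of the open set `O` lies on the graph of a generator of a prescribed
character `g`, defined on a small interval around `x`. Inside a box `U ×ˢ V ⊆ O`, two points of `U`
are therefore joined by a translation of the generated semigroup (go to a common partner in `V` and
back), and likewise two points of `V`. As `O` is connected, all first coordinates of points of `O`
are mutually joined by translations, as are all second coordinates, while a first and a second
coordinate are joined by a move of character `g`. So every move whose graph lies in the target set
agrees near each point with a generated move of the same character, and joining these local pieces
recovers it. Conversely, the target sets are join-closed move semigroups containing the generators.
-/

@[simp] lemma uEval_false (p x : ℝ) : uEval false p x = x + p := rfl

@[simp] lemma uEval_true (p x : ℝ) : uEval true p x = p - x := rfl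

lemma continuous_uEval (b : Bool) (p : ℝ) : Continuous (uEval b p) := by
  cases b
  · exact continuous_id.add continuous_const
  · exact continuous_const.sub continuous_id

lemma uEval_injective_param (b : Bool) (x : ℝ) : Function.Injective (uEval b · x) := by
  intro p q h
  cases b <;> simp only [uEval_false, uEval_true] at h <;> linarith

/-- The parameter of the inverse of the unrestricted move `uEval b p`, as in `Move.inv`. -/
def invParam (b : Bool) (p : ℝ) : ℝ := if b then p else -p

lemma uEval_invParam_uEval (b : Bool) (p x : ℝ) : uEval b (invParam b p) (uEval b p x) = x := by
  cases b <;> simp [invParam]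

lemma uEval_uEval_invParam (b : Bool) (p x : ℝ) : uEval b p (uEval b (invParam b p) x) = x := by
  cases b <;> simp [invParam]

lemma image_uEval (b : Bool) (p : ℝ) (U : Set ℝ) :
    uEval b p '' U = uEval b (invParam b p) ⁻¹' U :=
  image_eq_preimage_of_inverse (uEval_invParam_uEval b p) (uEval_uEval_invParam b p) ▸ rfl

namespace Move

lemma ValidDom.preimage_uEval {U : Set ℝ} (h : ValidDom U) (b : Bool) (p : ℝ) :
    ValidDom (uEval b p ⁻¹' U) := by
  refine ⟨h.1.preimage (continuous_uEval b p), ?_⟩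
  cases b
  · exact h.2.preimage_mono fun x y hxy => by simp only [uEval_false]; linarith
  · exact h.2.preimage_anti fun x y hxy => by simp only [uEval_true]; linarith

lemma ValidDom.image_uEval {U : Set ℝ} (h : ValidDom U) (b : Bool) (p : ℝ) :
    ValidDom (uEval b p '' U) :=
  _root_.image_uEval b p U ▸ h.preimage_uEval _ _

lemma ValidDom.inter {U V : Set ℝ} (hU : ValidDom U) (hV : ValidDom V) : ValidDom (U ∩ V) :=
  ⟨hU.1.inter hV.1, hU.2.inter hV.2⟩

lemma validDom_empty : ValidDom ∅ := ⟨isOpen_empty, ordConnected_empty⟩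

lemma validDom_Ioo (a b : ℝ) : ValidDom (Ioo a b) := ⟨isOpen_Ioo, ordConnected_Ioo⟩

@[simp] lemma mk'_isRefl (b : Bool) (p : ℝ) (D : Set ℝ) : (mk' b p D).isRefl = b := rfl

lemma mk'_of_ne_empty (b : Bool) (p : ℝ) {D : Set ℝ} (h : D ≠ ∅) : mk' b p D = ⟨b, p, D⟩ := by
  simp [mk', h]

lemma mk'_empty (b : Bool) (p q : ℝ) : mk' b p ∅ = mk' b q ∅ := by
  simp [mk']

lemma Valid.mk'_eq {m : Move} (hm : m.Valid) : mk' m.isRefl m.param m.dom = m := by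
  rcases eq_or_ne m.dom ∅ with h | h
  · obtain ⟨b, p, D⟩ := m
    simp_all [mk', Valid]
  · exact mk'_of_ne_empty _ _ h

lemma valid_mk' (b : Bool) (p : ℝ) {D : Set ℝ} (h : ValidDom D) : (mk' b p D).Valid := by
  rcases eq_or_ne D ∅ with rfl | hD
  · exact ⟨h, fun _ => by simp [mk']⟩
  · rw [mk'_of_ne_empty _ _ hD]
    exact ⟨h, fun h' => absurd h' hD⟩

lemma eval_mk' (b : Bool) (p : ℝ) {D : Set ℝ} (h : D ≠ ∅) : (mk' b p D).eval = uEval b p := by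
  rw [mk'_of_ne_empty _ _ h]
  rfl

lemma graph_subset_iff {m : Move} {X : Set (ℝ × ℝ)} :
    m.graph ⊆ X ↔ ∀ x ∈ m.dom, (x, m.eval x) ∈ X :=
  image_subset_iff

lemma comp_eval (m₂ m₁ : Move) {x : ℝ} (hx : x ∈ (m₂.comp m₁).dom) :
    (m₂.comp m₁).eval x = m₂.eval (m₁.eval x) := by
  have hne : m₁.dom ∩ m₁.eval ⁻¹' m₂.dom ≠ ∅ := (nonempty_of_mem hx).ne_empty
  rw [comp, eval_mk' _ _ hne]
  cases h₁ : m₁.isRefl <;> cases h₂ : m₂.isRefl <;>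
    simp [eval, uEval, h₁, h₂] <;> ring

lemma inv_eval (m : Move) {x : ℝ} (hx : x ∈ m.dom) : m.inv.eval (m.eval x) = x := by
  rw [inv, eval_mk' _ _ (nonempty_of_mem (mem_image_of_mem _ hx)).ne_empty]
  exact uEval_invParam_uEval _ _ _

lemma Valid.comp {m₁ m₂ : Move} (h₁ : m₁.Valid) (h₂ : m₂.Valid) : (m₂.comp m₁).Valid :=
  valid_mk' _ _ (h₁.1.inter (h₂.1.preimage_uEval _ _))

lemma Valid.inv {m : Move} (h : m.Valid) : m.inv.Valid :=
  valid_mk' _ _ (h.1.image_uEval _ _)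

end Move

lemma isMoveSemigroup_setOf_valid : IsMoveSemigroup {m : Move | m.Valid} :=
  ⟨fun _ hm => hm, fun _ h₁ _ h₂ => h₁.comp h₂, fun _ hm => hm.inv⟩

lemma subset_semi (Ω : Set Move) : Ω ⊆ semi Ω := fun _ hm _ hΓ => hΓ.2 hm

lemma isMoveSemigroup_semi {Ω : Set Move} (hΩ : IsMoveEnsemble Ω) : IsMoveSemigroup (semi Ω) :=
  ⟨fun _ hm => hm _ ⟨isMoveSemigroup_setOf_valid, hΩ⟩,
    fun _ h₁ _ h₂ Γ hΓ => hΓ.1.2.1 _ (h₁ Γ hΓ) _ (h₂ Γ hΓ),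
    fun _ hm Γ hΓ => hΓ.1.2.2 _ (hm Γ hΓ)⟩

lemma semi_subset_joinsemi (Ω : Set Move) : semi Ω ⊆ joinsemi Ω := fun _ hm _ hΓ => hΓ.2 hm

lemma joinClosed_joinsemi (Ω : Set Move) : JoinClosed (joinsemi Ω) :=
  ⟨fun m hm D' hD' hv Γ hΓ => hΓ.1.1 m (hm Γ hΓ) D' hD' hv,
    fun b p J hJ hmem hJc Γ hΓ => hΓ.1.2 b p J hJ (fun I hI => hmem I hI Γ hΓ) hJc⟩

lemma joinsemi_subset {Ω Γ : Set Move} (hΓ : IsMoveSemigroup Γ) (hΓj : JoinClosed Γ)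
    (hΩ : Ω ⊆ Γ) : joinsemi Ω ⊆ Γ :=
  fun _ hm => hm Γ ⟨hΓj, fun _ hm' => hm' Γ ⟨hΓ, hΩ⟩⟩

def Reach (Γ : Set Move) (b : Bool) (x y : ℝ) : Prop :=
  ∃ m ∈ Γ, m.isRefl = b ∧ x ∈ m.dom ∧ m.eval x = y

section Reach

variable {Γ : Set Move} {b b₁ b₂ : Bool} {x y z : ℝ}

lemma Reach.symm (hΓ : IsMoveSemigroup Γ) (h : Reach Γ b x y) : Reach Γ b y x := by
  obtain ⟨m, hm, rfl, hx, rfl⟩ := h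
  exact ⟨m.inv, hΓ.2.2 m hm, rfl, mem_image_of_mem _ hx, m.inv_eval hx⟩

lemma Reach.trans (hΓ : IsMoveSemigroup Γ) (h₁ : Reach Γ b₁ x y) (h₂ : Reach Γ b₂ y z) :
    Reach Γ (b₂ != b₁) x z := by
  obtain ⟨m₁, hm₁, rfl, hx, rfl⟩ := h₁
  obtain ⟨m₂, hm₂, rfl, hy, rfl⟩ := h₂
  have hx' : x ∈ (m₂.comp m₁).dom := ⟨hx, hy⟩
  exact ⟨m₂.comp m₁, hΓ.2.1 m₁ hm₁ m₂ hm₂, rfl, hx', Move.comp_eval _ _ hx'⟩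

lemma Reach.trans_false (hΓ : IsMoveSemigroup Γ) (h₁ : Reach Γ false x y)
    (h₂ : Reach Γ b y z) : Reach Γ b x z := by
  simpa using h₁.trans hΓ h₂

lemma Reach.trans_symm (hΓ : IsMoveSemigroup Γ) (h₁ : Reach Γ b x y) (h₂ : Reach Γ b z y) :
    Reach Γ false x z := by
  simpa using h₁.trans hΓ (h₂.symm hΓ)

lemma Reach.symm_trans (hΓ : IsMoveSemigroup Γ) (h₁ : Reach Γ b x y) (h₂ : Reach Γ b x z) :
    Reach Γ false y z := by
  simpa using (h₁.symm hΓ).trans hΓ h₂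

lemma reach_false_union (hΓ : IsMoveSemigroup Γ) {S T : Set ℝ}
    (hS : ∀ x ∈ S, ∀ x' ∈ S, Reach Γ false x x') (hT : ∀ y ∈ T, ∀ y' ∈ T, Reach Γ false y y')
    {x₀ y₀ : ℝ} (hx₀ : x₀ ∈ S) (hy₀ : y₀ ∈ T) (h₀ : Reach Γ false x₀ y₀) :
    ∀ x ∈ S ∪ T, ∀ y ∈ S ∪ T, Reach Γ false x y := by
  have hS₀ : ∀ x ∈ S ∪ T, Reach Γ false x₀ x := by
    rintro x (hx | hx)
    · exact hS _ hx₀ _ hx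
    · exact h₀.trans_false hΓ (hT _ hy₀ _ hx)
  exact fun x hx y hy => ((hS₀ x hx).symm hΓ).trans_false hΓ (hS₀ y hy)

lemma reach_of_reach_false {S : Set ℝ} (hΓ : IsMoveSemigroup Γ)
    (hS : ∀ x ∈ S, ∀ x' ∈ S, Reach Γ false x x') {x₀ y₀ : ℝ} (hx₀ : x₀ ∈ S) (hy₀ : y₀ ∈ S)
    (h₀ : Reach Γ b x₀ y₀) : ∀ x ∈ S, ∀ y ∈ S, Reach Γ b x y := fun x hx y hy =>
  (hS x hx x₀ hx₀).trans_false hΓ (by simpa using h₀.trans hΓ (hS y₀ hy₀ y hy))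

end Reach

lemma mem_joinsemi_of_reach {Ω : Set Move} (hΩ : IsMoveEnsemble Ω) {m : Move} (hm : m.Valid)
    (hchar : ∃ m' ∈ semi Ω, m'.isRefl = m.isRefl)
    (h : ∀ x ∈ m.dom, Reach (semi Ω) m.isRefl x (m.eval x)) : m ∈ joinsemi Ω := by
  obtain ⟨hrestrict, hjoin⟩ := joinClosed_joinsemi Ω
  let J := {D | D ⊆ m.dom ∧ Move.mk' m.isRefl m.param D ∈ joinsemi Ω}
  have hempty : ∅ ∈ J := by
    obtain ⟨m', hm', hb⟩ := hchar
    refine ⟨empty_subset _, ?_⟩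
    have := hrestrict m' (semi_subset_joinsemi Ω hm') ∅ (empty_subset _) Move.validDom_empty
    rwa [hb, Move.mk'_empty _ m'.param m.param] at this
  have hcover : ⋃₀ J = m.dom := by
    refine subset_antisymm (sUnion_subset fun _ hD => hD.1) fun x hx => ?_
    obtain ⟨mx, hmx, hb, hxmx, he⟩ := h x hx
    -- a move of the same character through `(x, m.eval x)` has the parameter of `m`
    have hp : mx.param = m.param := by
      apply uEval_injective_param m.isRefl x
      simpa [Move.eval, hb] using he
    have hv : mx.Valid := (isMoveSemigroup_semi hΩ).1 mx hmx
    have := hrestrict mx (semi_subset_joinsemi Ω hmx) (mx.dom ∩ m.dom) inter_subset_left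
      (hv.1.inter hm.1)
    rw [hb, hp] at this
    exact ⟨_, ⟨inter_subset_right, this⟩, hxmx, hx⟩
  have := hjoin m.isRefl m.param J ⟨∅, hempty⟩ (fun _ hD => hD.2) (hcover ▸ hm.1.2)
  rwa [hcover, hm.mk'_eq] at this

def gradedMoves (C : Bool → Prop) (F : Bool → Set (ℝ × ℝ)) : Set Move :=
  {m | C m.isRefl ∧ m.Valid ∧ m.graph ⊆ F m.isRefl}

section gradedMoves

variable {C : Bool → Prop} {F : Bool → Set (ℝ × ℝ)}

lemma mk'_mem_gradedMoves {b : Bool} {p : ℝ} {D : Set ℝ} (hC : C b) (hD : Move.ValidDom D)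
    (h : ∀ x ∈ D, (x, uEval b p x) ∈ F b) : Move.mk' b p D ∈ gradedMoves C F := by
  refine ⟨hC, Move.valid_mk' b p hD, Move.graph_subset_iff.2 fun x (hx : x ∈ D) => ?_⟩
  rw [Move.eval_mk' b p (nonempty_of_mem hx).ne_empty]
  exact h x hx

lemma joinClosed_gradedMoves : JoinClosed (gradedMoves C F) := by
  refine ⟨fun m ⟨hC, hv, hg⟩ D' hD' hvD' => mk'_mem_gradedMoves hC hvD' fun x hx =>
    Move.graph_subset_iff.1 hg x (hD' hx), fun b p J ⟨I₀, hI₀⟩ hJ hJc => ?_⟩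
  have hI : ∀ I ∈ J, Move.ValidDom I ∧ ∀ x ∈ I, (x, uEval b p x) ∈ F b := fun I hI => by
    obtain ⟨-, hv, hg⟩ := hJ I hI
    refine ⟨hv.1, fun x hx => ?_⟩
    simpa [Move.eval_mk' b p (nonempty_of_mem hx).ne_empty] using Move.graph_subset_iff.1 hg x hx
  refine mk'_mem_gradedMoves (hJ I₀ hI₀).1 ⟨isOpen_sUnion fun I hI' => (hI I hI').1.1, hJc⟩ ?_
  rintro x ⟨I, hI', hx⟩
  exact (hI I hI').2 x hx

lemma isMoveSemigroup_gradedMoves (hC : ∀ b₁ b₂, C b₁ → C b₂ → C (b₂ != b₁))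
    (hcomp : ∀ b₁ b₂ x y z, (x, y) ∈ F b₁ → (y, z) ∈ F b₂ → (x, z) ∈ F (b₂ != b₁))
    (hswap : ∀ b x y, (x, y) ∈ F b → (y, x) ∈ F b) :
    IsMoveSemigroup (gradedMoves C F) := by
  refine ⟨fun _ hm => hm.2.1, fun m₁ ⟨hC₁, hv₁, hg₁⟩ m₂ ⟨hC₂, hv₂, hg₂⟩ => ?_,
    fun m ⟨hC, hv, hg⟩ => ?_⟩
  · refine ⟨hC _ _ hC₁ hC₂, hv₁.comp hv₂, Move.graph_subset_iff.2 fun x hx => ?_⟩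
    rw [Move.comp_eval _ _ hx]
    exact hcomp _ _ _ _ _ (Move.graph_subset_iff.1 hg₁ x hx.1)
      (Move.graph_subset_iff.1 hg₂ _ hx.2)
  · refine ⟨hC, hv.inv, Move.graph_subset_iff.2 ?_⟩
    rintro _ ⟨x, hx, rfl⟩
    rw [m.inv_eval hx]
    exact hswap _ _ _ (Move.graph_subset_iff.1 hg x hx)

theorem joinsemi_eq_gradedMoves {Ω : Set Move} (hC : ∀ b₁ b₂, C b₁ → C b₂ → C (b₂ != b₁))
    (hcomp : ∀ b₁ b₂ x y z, (x, y) ∈ F b₁ → (y, z) ∈ F b₂ → (x, z) ∈ F (b₂ != b₁))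
    (hswap : ∀ b x y, (x, y) ∈ F b → (y, x) ∈ F b) (hΩ : Ω ⊆ gradedMoves C F)
    (hne : ∀ b, C b → (F b).Nonempty)
    (hreach : ∀ b, C b → ∀ q ∈ F b, Reach (semi Ω) b q.1 q.2) :
    joinsemi Ω = gradedMoves C F := by
  refine subset_antisymm
    (joinsemi_subset (isMoveSemigroup_gradedMoves hC hcomp hswap) joinClosed_gradedMoves hΩ)
    fun m ⟨hCm, hv, hg⟩ => mem_joinsemi_of_reach (fun m hm => (hΩ hm).2.1) hv ?_
      fun x hx => hreach _ hCm _ (Move.graph_subset_iff.1 hg x hx)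
  obtain ⟨q, hq⟩ := hne _ hCm
  obtain ⟨m', hm', hb, -⟩ := hreach _ hCm q hq
  exact ⟨m', hm', hb⟩

end gradedMoves

lemma joinsemi_eq_tMoves_prod_self {Ω : Set Move} {S : Set ℝ} (hΩ : Ω ⊆ tMoves (S ×ˢ S))
    (hS : S.Nonempty) (h : ∀ x ∈ S, ∀ y ∈ S, Reach (semi Ω) false x y) :
    joinsemi Ω = tMoves (S ×ˢ S) :=
  joinsemi_eq_gradedMoves (C := (· = false)) (F := fun _ => S ×ˢ S) (by simp_all)
    (fun _ _ _ _ _ h₁ h₂ => ⟨h₁.1, h₂.2⟩) (fun _ _ _ h => ⟨h.2, h.1⟩) hΩ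
    (fun _ _ => hS.prod hS) fun _ hb q hq => hb ▸ h _ hq.1 _ hq.2

lemma joinsemi_eq_movesIn_prod_self {Ω : Set Move} {S : Set ℝ} (hΩ : Ω ⊆ movesIn (S ×ˢ S))
    (hfalse : ∀ x ∈ S, ∀ y ∈ S, Reach (semi Ω) false x y) {x₀ y₀ : ℝ} (hx₀ : x₀ ∈ S)
    (hy₀ : y₀ ∈ S) (h₀ : Reach (semi Ω) true x₀ y₀) :
    joinsemi Ω = movesIn (S ×ˢ S) := by
  have hΓ := isMoveSemigroup_semi fun m hm => (hΩ hm).1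
  have hmoves : movesIn (S ×ˢ S) = gradedMoves (fun _ => True) (fun _ => S ×ˢ S) := by
    ext m
    simp [movesIn, gradedMoves]
  rw [hmoves] at hΩ ⊢
  refine joinsemi_eq_gradedMoves (fun _ _ _ _ => trivial) (fun _ _ _ _ _ h₁ h₂ => ⟨h₁.1, h₂.2⟩)
    (fun _ _ _ h => ⟨h.2, h.1⟩) hΩ (fun _ _ => ⟨(x₀, x₀), hx₀, hx₀⟩) ?_
  rintro (_ | _) - q ⟨hx, hy⟩
  exacts [hfalse _ hx _ hy, reach_of_reach_false hΓ hfalse hx₀ hy₀ h₀ _ hx _ hy]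

lemma rMoves_union_tMoves (A B : Set (ℝ × ℝ)) :
    rMoves A ∪ tMoves B = gradedMoves (fun _ => True) (fun b => bif b then A else B) := by
  ext ⟨b, p, D⟩
  cases b <;> simp [rMoves, tMoves, gradedMoves]

lemma joinsemi_eq_of_disjoint {Ω : Set Move} {D I : Set ℝ} (hDI : Disjoint D I)
    (hΩ : Ω ⊆ rMoves (D ×ˢ I ∪ I ×ˢ D) ∪ tMoves (D ×ˢ D ∪ I ×ˢ I))
    (hD : D.Nonempty) (hI : I.Nonempty)
    (hDD : ∀ x ∈ D, ∀ x' ∈ D, Reach (semi Ω) false x x')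
    (hII : ∀ y ∈ I, ∀ y' ∈ I, Reach (semi Ω) false y y')
    (hDI' : ∀ x ∈ D, ∀ y ∈ I, Reach (semi Ω) true x y) :
    joinsemi Ω = rMoves (D ×ˢ I ∪ I ×ˢ D) ∪ tMoves (D ×ˢ D ∪ I ×ˢ I) := by
  rw [rMoves_union_tMoves] at hΩ ⊢
  refine joinsemi_eq_gradedMoves (fun _ _ _ _ => trivial) ?_ ?_ hΩ ?_ ?_
  · have := disjoint_left.1 hDI
    rintro (_ | _) (_ | _) x y z h₁ h₂ <;>
      simp only [cond_true, cond_false, mem_union, mem_prod, bne_self_eq_false, Bool.bne_false,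
        Bool.bne_true] at h₁ h₂ ⊢ <;> grind
  · rintro (_ | _) x y h <;> simp only [cond_true, cond_false, mem_union, mem_prod] at h ⊢ <;> tauto
  · rintro (_ | _) -
    exacts [(hD.prod hD).mono subset_union_left, (hD.prod hI).mono subset_union_left]
  · rintro (_ | _) - ⟨x, y⟩ ((⟨hx, hy⟩ | ⟨hx, hy⟩))
    exacts [hDD x hx y hy, hII x hx y hy, hDI' x hx y hy, (hDI' y hy x hx).symm
      (isMoveSemigroup_semi fun m hm => (hΩ hm).2.1)]

section OpenSet

variable {O : Set (ℝ × ℝ)}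

lemma exists_mem_movesIn_of_mem (hO : IsOpen O) (b : Bool) {x y : ℝ} (h : (x, y) ∈ O) :
    ∃ m ∈ movesIn O, m.isRefl = b ∧ x ∈ m.dom ∧ m.eval x = y := by
  set p := if b then x + y else y - x
  have hp : uEval b p x = y := by cases b <;> simp [p]
  have hnhds : (fun z => (z, uEval b p z)) ⁻¹' O ∈ nhds x :=
    (hO.preimage (continuous_id.prodMk (continuous_uEval b p))).mem_nhds (by simpa [hp])
  obtain ⟨l, u, hx, hlu⟩ := mem_nhds_iff_exists_Ioo_subset.1 hnhds
  refine ⟨⟨b, p, Ioo l u⟩,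
    ⟨⟨Move.validDom_Ioo l u, fun h' => absurd h' (nonempty_of_mem hx).ne_empty⟩, ?_⟩,
    rfl, hx, hp⟩
  rintro _ ⟨z, hz, rfl⟩
  exact hlu hz

lemma domOf_eq_image_fst (hO : IsOpen O) : domOf O = Prod.fst '' O := by
  ext x
  constructor
  · rintro ⟨m, hm, hx⟩
    exact ⟨_, hm.2 ⟨x, hx, rfl⟩, rfl⟩
  · rintro ⟨⟨x, y⟩, h, rfl⟩
    obtain ⟨m, hm, -, hx, -⟩ := exists_mem_movesIn_of_mem hO false h
    exact ⟨m, hm, hx⟩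

lemma imOf_eq_image_snd (hO : IsOpen O) : imOf O = Prod.snd '' O := by
  ext y
  constructor
  · rintro ⟨m, hm, x, hx, rfl⟩
    exact ⟨_, hm.2 ⟨x, hx, rfl⟩, rfl⟩
  · rintro ⟨⟨x, y⟩, h, rfl⟩
    obtain ⟨m, hm, -, hx, he⟩ := exists_mem_movesIn_of_mem hO false h
    exact ⟨m, hm, x, hx, he⟩

lemma reach_semi_of_mem (hO : IsOpen O) {Ω : Set Move} {g : Bool}
    (hΩ : ∀ m ∈ movesIn O, m.isRefl = g → m ∈ Ω) {q : ℝ × ℝ} (hq : q ∈ O) :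
    Reach (semi Ω) g q.1 q.2 := by
  obtain ⟨m, hm, hg, hx, he⟩ := exists_mem_movesIn_of_mem hO g hq
  exact ⟨m, subset_semi Ω (hΩ m hm hg), hg, hx, he⟩

lemma reach_false_of_mem_box {Γ : Set Move} (hΓ : IsMoveSemigroup Γ) {g : Bool}
    (hgen : ∀ q ∈ O, Reach Γ g q.1 q.2) {U V : Set ℝ} (hUV : U ×ˢ V ⊆ O) {q q' : ℝ × ℝ}
    (hq : q ∈ U ×ˢ V) (hq' : q' ∈ U ×ˢ V) :
    Reach Γ false q.1 q'.1 ∧ Reach Γ false q.2 q'.2 := by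
  have hcorner : Reach Γ g q'.1 q.2 := hgen (q'.1, q.2) (hUV ⟨hq'.1, hq.2⟩)
  exact ⟨(hgen q (hUV hq)).trans_symm hΓ hcorner, hcorner.symm_trans hΓ (hgen q' (hUV hq'))⟩

lemma reach_false_of_isPreconnected (hO : IsOpen O) (hc : IsPreconnected O) {Γ : Set Move}
    (hΓ : IsMoveSemigroup Γ) {g : Bool} (hgen : ∀ q ∈ O, Reach Γ g q.1 q.2) {q q' : ℝ × ℝ}
    (hq : q ∈ O) (hq' : q' ∈ O) : Reach Γ false q.1 q'.1 ∧ Reach Γ false q.2 q'.2 := by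
  refine hc.induction₂ (fun q q' => Reach Γ false q.1 q'.1 ∧ Reach Γ false q.2 q'.2)
    (fun q hq => ?_) (fun _ _ _ _ _ _ h₁ h₂ => ⟨h₁.1.trans hΓ h₂.1, h₁.2.trans hΓ h₂.2⟩)
    (fun _ _ _ _ h => ⟨h.1.symm hΓ, h.2.symm hΓ⟩) hq hq'
  obtain ⟨U, hU, V, hV, hUV⟩ := mem_nhds_prod_iff.1 (hO.mem_nhds hq)
  filter_upwards [nhdsWithin_le_nhds (prod_mem_nhds hU hV)] with q' hq'
  exact reach_false_of_mem_box hΓ hgen hUV ⟨mem_of_mem_nhds hU, mem_of_mem_nhds hV⟩ hq'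

lemma reach_of_mem_image (hO : IsOpen O) (hc : IsPreconnected O) {Ω : Set Move} {g : Bool}
    (hΩO : Ω ⊆ movesIn O) (hΩ : ∀ m ∈ movesIn O, m.isRefl = g → m ∈ Ω) :
    (∀ x ∈ Prod.fst '' O, ∀ x' ∈ Prod.fst '' O, Reach (semi Ω) false x x') ∧
    (∀ y ∈ Prod.snd '' O, ∀ y' ∈ Prod.snd '' O, Reach (semi Ω) false y y') ∧
    (∀ x ∈ Prod.fst '' O, ∀ y ∈ Prod.snd '' O, Reach (semi Ω) g x y) := by
  have hΓ := isMoveSemigroup_semi fun m hm => (hΩO hm).1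
  have hgen : ∀ q ∈ O, Reach (semi Ω) g q.1 q.2 := fun q hq => reach_semi_of_mem hO hΩ hq
  refine ⟨?_, ?_, ?_⟩
  · rintro _ ⟨q, hq, rfl⟩ _ ⟨q', hq', rfl⟩
    exact (reach_false_of_isPreconnected hO hc hΓ hgen hq hq').1
  · rintro _ ⟨q, hq, rfl⟩ _ ⟨q', hq', rfl⟩
    exact (reach_false_of_isPreconnected hO hc hΓ hgen hq hq').2
  · rintro _ ⟨q, hq, rfl⟩ _ ⟨q', hq', rfl⟩
    exact (reach_false_of_isPreconnected hO hc hΓ hgen hq hq').1.trans_false hΓ (hgen q' hq')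

lemma reach_false_of_mem_union_image (hO : IsOpen O) (hc : IsConnected O) {Ω : Set Move}
    (hΩO : Ω ⊆ movesIn O) (hΩ : ∀ m ∈ movesIn O, m.isRefl = false → m ∈ Ω) :
    ∀ x ∈ Prod.fst '' O ∪ Prod.snd '' O, ∀ y ∈ Prod.fst '' O ∪ Prod.snd '' O,
      Reach (semi Ω) false x y := by
  obtain ⟨q₀, hq₀⟩ := hc.nonempty
  obtain ⟨hDD, hII, hDI⟩ := reach_of_mem_image hO hc.isPreconnected hΩO hΩ
  have hD := mem_image_of_mem Prod.fst hq₀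
  have hI := mem_image_of_mem Prod.snd hq₀
  exact reach_false_union (isMoveSemigroup_semi fun m hm => (hΩO hm).1) hDD hII hD hI
    (hDI _ hD _ hI)

end OpenSet

/-- The joined move semigroups generated by all moves through a connected
open set. -/
theorem joinsemi_of_open_set (O : Set (ℝ × ℝ))
    (hOopen : IsOpen O) (hOconn : IsConnected O) :
    (joinsemi (tMoves O)
        = tMoves ((domOf O ∪ imOf O) ×ˢ (domOf O ∪ imOf O))) ∧
    (domOf O ∩ imOf O = ∅ →
      joinsemi (rMoves O)
        = rMoves ((domOf O ×ˢ imOf O) ∪ (imOf O ×ˢ domOf O)) ∪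
          tMoves ((domOf O ×ˢ domOf O) ∪ (imOf O ×ˢ imOf O))) ∧
    ((domOf O ∩ imOf O).Nonempty →
      joinsemi (rMoves O)
        = movesIn ((domOf O ∪ imOf O) ×ˢ (domOf O ∪ imOf O))) ∧
    (joinsemi (movesIn O)
        = movesIn ((domOf O ∪ imOf O) ×ˢ (domOf O ∪ imOf O))) := by
  obtain ⟨q₀, hq₀⟩ := hOconn.nonempty
  rw [domOf_eq_image_fst hOopen, imOf_eq_image_snd hOopen]
  set D := Prod.fst '' O
  set I := Prod.snd '' O
  have hD : q₀.1 ∈ D := mem_image_of_mem _ hq₀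
  have hI : q₀.2 ∈ I := mem_image_of_mem _ hq₀
  have hgraph : ∀ m ∈ movesIn O, m.graph ⊆ (D ∪ I) ×ˢ (D ∪ I) := fun m hm =>
    hm.2.trans (subset_prod.trans (prod_mono subset_union_left subset_union_right))
  obtain ⟨hDDr, hIIr, hDIr⟩ := reach_of_mem_image hOopen hOconn.isPreconnected (Ω := rMoves O)
    (fun m hm => hm.2) fun m hm hb => ⟨hb, hm⟩
  refine ⟨?_, fun hDI => ?_, fun ⟨z, hzD, hzI⟩ => ?_, ?_⟩
  · exact joinsemi_eq_tMoves_prod_self (fun m hm => ⟨hm.1, hm.2.1, hgraph m hm.2⟩) ⟨_, Or.inl hD⟩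
      (reach_false_of_mem_union_image hOopen hOconn (fun m hm => hm.2) fun m hm hb => ⟨hb, hm⟩)
  · exact joinsemi_eq_of_disjoint (disjoint_iff_inter_eq_empty.2 hDI)
      (fun m hm => Or.inl ⟨hm.1, hm.2.1, hm.2.2.trans (subset_prod.trans subset_union_left)⟩)
      ⟨_, hD⟩ ⟨_, hI⟩ hDDr hIIr hDIr
  · -- `z ∈ D ∩ I` links the translation classes of `D` and `I`
    have hfalse := reach_false_union (isMoveSemigroup_semi fun m hm => hm.2.1) hDDr hIIr hzD hzI
      (hDDr z hzD z hzD)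
    exact joinsemi_eq_movesIn_prod_self (fun m hm => ⟨hm.2.1, hgraph m hm.2⟩) hfalse (Or.inl hD)
      (Or.inr hI) (hDIr _ hD _ hI)
  · exact joinsemi_eq_movesIn_prod_self (fun m hm => ⟨hm.1, hgraph m hm⟩)
      (reach_false_of_mem_union_image hOopen hOconn subset_rfl fun m hm _ => hm) (Or.inl hD)
      (Or.inr hI) (reach_semi_of_mem hOopen (fun m hm _ => hm) hq₀)
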